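/- arXiv:2207.05941 — 4 statements merged into one kernel-verified Lean document; each statement's English description precedes it below -/
import Mathlib

section
/- Let (g, H, e, L, S, T) be a homotopy Cartan calculus. Then the map L : g → H is a morphism of differential graded Lie algebras; that is, d(L_θ) = L_{δθ} and [L_θ, L_ρ] = L_{[θ,ρ]} for all θ, ρ ∈ g. -/
/-- A differential graded Lie algebra over `ℚ` (cohomological convention): a
`ℚ`-module with an internal `ℤ`-grading, a differential `d` of degree `+1`, and a
graded Lie bracket for which `d` is a derivation. -/
structure DGLie where
  M : Type*
  [grp : AddCommGroup M]
  [mod : Module ℚ M]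
  gr : ℤ → Submodule ℚ M
  gr_top : iSup gr = ⊤
  d : M →ₗ[ℚ] M
  d_deg : ∀ n : ℤ, ∀ x ∈ gr n, d x ∈ gr (n + 1)
  d_sq : ∀ x, d (d x) = 0
  bracket : M →ₗ[ℚ] M →ₗ[ℚ] M
  bracket_deg : ∀ m n : ℤ, ∀ x ∈ gr m, ∀ y ∈ gr n, bracket x y ∈ gr (m + n)
  antisymm : ∀ m n : ℤ, ∀ x ∈ gr m, ∀ y ∈ gr n,
    bracket x y = -(((-1 : ℚ) ^ (m * n)) • bracket y x)
  jacobi : ∀ m n : ℤ, ∀ x ∈ gr m, ∀ y ∈ gr n, ∀ z,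
    bracket x (bracket y z)
      = bracket (bracket x y) z + ((-1 : ℚ) ^ (m * n)) • bracket y (bracket x z)
  d_der : ∀ m : ℤ, ∀ x ∈ gr m, ∀ y,
    d (bracket x y) = bracket (d x) y + ((-1 : ℚ) ^ m) • bracket x (d y)

attribute [instance] DGLie.grp DGLie.mod

/-- A mixed differential graded Lie algebra `(ℋ, d, B, [ , ])`: a dg Lie algebra
together with a second differential `B` of degree `-1` with `B ∘ B = 0`,
`dB + Bd = 0`, which is also a derivation of the bracket. -/
structure MixedDGLie extends DGLie where
  B : M →ₗ[ℚ] M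
  B_deg : ∀ n : ℤ, ∀ x ∈ gr n, B x ∈ gr (n - 1)
  B_sq : ∀ x, B (B x) = 0
  dB : ∀ x, d (B x) + B (d x) = 0
  B_der : ∀ m : ℤ, ∀ x ∈ gr m, ∀ y,
    B (bracket x y) = bracket (B x) y + ((-1 : ℚ) ^ m) • bracket x (B y)

/-- A homotopy Cartan calculus `(𝔤, ℋ, e, L, S, T)` in the sense of
Fiorenza--Kowalzig: a homotopy pre-Cartan calculus `(𝔤, ℋ, e, L, S)` together
with a Gelfan'd--Daletskiĭ--Tsygan homotopy `T`. -/
structure CartanCalculus (G : DGLie) (H : MixedDGLie) where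
  e : G.M →ₗ[ℚ] H.M
  L : G.M →ₗ[ℚ] H.M
  S : G.M →ₗ[ℚ] H.M
  T : G.M →ₗ[ℚ] G.M →ₗ[ℚ] H.M
  e_deg : ∀ n : ℤ, ∀ θ ∈ G.gr n, e θ ∈ H.gr (n + 1)
  L_deg : ∀ n : ℤ, ∀ θ ∈ G.gr n, L θ ∈ H.gr n
  S_deg : ∀ n : ℤ, ∀ θ ∈ G.gr n, S θ ∈ H.gr (n - 1)
  T_deg : ∀ m n : ℤ, ∀ θ ∈ G.gr m, ∀ ρ ∈ G.gr n, T θ ρ ∈ H.gr (m + n)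
  cartan : ∀ θ, L θ = H.B (e θ) + H.d (S θ) + S (G.d θ)
  de : ∀ θ, H.d (e θ) + e (G.d θ) = 0
  BS : ∀ θ, H.B (S θ) = 0
  eL : ∀ m : ℤ, ∀ θ ∈ G.gr m, ∀ ρ,
    H.bracket (e θ) (L ρ) - e (G.bracket θ ρ)
      = H.d (T θ ρ) - T (G.d θ) ρ - ((-1 : ℚ) ^ m) • T θ (G.d ρ)
  SL : ∀ θ ρ, H.bracket (S θ) (L ρ) - S (G.bracket θ ρ) = H.B (T θ ρ)

/-!
Write `L = B e + d S + S δ` (Cartan's formula) and note that `B L = 0`, since `B² = 0`,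
`dB = -Bd` and `B S = 0`; likewise `d L = L δ` because `de = -eδ`. For homogeneous `θ`,
expanding `[L θ, L ρ]` by Cartan's formula and moving `B` and `d` out of the bracket with
the derivation rules (using `B L ρ = 0` and `d L ρ = L δ ρ`) leaves brackets `[e θ, L ρ]` and
`[S θ, L ρ]`, `[S θ, L δρ]`, `[S δθ, L ρ]`. The two homotopy identities replace them by
`e [θ, ρ]`, `S [θ, ρ]`, `S [θ, δρ]`, `S [δθ, ρ]` plus terms in `T`, which cancel by
`dB + Bd = 0`; what remains is Cartan's formula for `L [θ, ρ]`.
-/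

lemma neg_one_zpow_sub_one {R : Type*} [DivisionRing R] (m : ℤ) :
    (-1 : R) ^ (m - 1) = -(-1 : R) ^ m := by
  rw [zpow_sub_one₀ (by norm_num), inv_neg_one, mul_neg_one]

namespace DGLie

variable (G : DGLie)

lemma linearMap_ext_of_gr {N : Type*} [AddCommGroup N] [Module ℚ N] {f g : G.M →ₗ[ℚ] N}
    (h : ∀ n, ∀ x ∈ G.gr n, f x = g x) : f = g := by
  rw [← LinearMap.eqLocus_eq_top, eq_top_iff, ← G.gr_top]
  exact iSup_le fun n x hx => h n x hx

end DGLie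

namespace CartanCalculus

variable {G : DGLie} {H : MixedDGLie} (P : CartanCalculus G H)

lemma d_L (θ : G.M) : H.d (P.L θ) = P.L (G.d θ) := by
  have hdB : H.d (H.B (P.e θ)) = -H.B (H.d (P.e θ)) := eq_neg_of_add_eq_zero_left (H.dB _)
  have hde : H.d (P.e θ) = -P.e (G.d θ) := eq_neg_of_add_eq_zero_left (P.de θ)
  rw [P.cartan θ, P.cartan (G.d θ), G.d_sq, map_zero, map_add, map_add, H.d_sq, hdB, hde,
    map_neg, neg_neg, add_zero, add_zero]

lemma B_L (θ : G.M) : H.B (P.L θ) = 0 := by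
  have hBd : H.B (H.d (P.S θ)) = -H.d (H.B (P.S θ)) := eq_neg_of_add_eq_zero_right (H.dB _)
  rw [P.cartan θ, map_add, map_add, H.B_sq, hBd, P.BS, P.BS, map_zero, neg_zero, zero_add,
    zero_add]

lemma bracket_B_e_L {m : ℤ} {θ : G.M} (hθ : θ ∈ G.gr m) (ρ : G.M) :
    H.bracket (H.B (P.e θ)) (P.L ρ) = H.B (H.bracket (P.e θ) (P.L ρ)) := by
  rw [H.B_der (m + 1) _ (P.e_deg m θ hθ), P.B_L, map_zero, smul_zero, add_zero]

lemma bracket_d_S_L {m : ℤ} {θ : G.M} (hθ : θ ∈ G.gr m) (ρ : G.M) :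
    H.bracket (H.d (P.S θ)) (P.L ρ)
      = H.d (H.bracket (P.S θ) (P.L ρ)) + (-1 : ℚ) ^ m • H.bracket (P.S θ) (P.L (G.d ρ)) := by
  rw [H.d_der (m - 1) _ (P.S_deg m θ hθ), P.d_L, neg_one_zpow_sub_one, neg_smul,
    neg_add_cancel_right]

lemma bracket_L_L_of_mem {m : ℤ} {θ : G.M} (hθ : θ ∈ G.gr m) (ρ : G.M) :
    H.bracket (P.L θ) (P.L ρ) = P.L (G.bracket θ ρ) := by
  have hLθ := P.cartan θ
  have hLθρ := P.cartan (G.bracket θ ρ)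
  have hSδ : P.S (G.d (G.bracket θ ρ))
      = P.S (G.bracket (G.d θ) ρ) + (-1 : ℚ) ^ m • P.S (G.bracket θ (G.d ρ)) := by
    rw [G.d_der m θ hθ ρ, map_add, map_smul]
  have heL := congrArg H.B (P.eL m θ hθ ρ)
  have hSL := congrArg H.d (P.SL θ ρ)
  have hdBT : H.d (H.B (P.T θ ρ)) + H.B (H.d (P.T θ ρ)) = 0 := H.dB _
  simp only [map_sub, map_smul] at heL hSL
  rw [hLθ, map_add, map_add, LinearMap.add_apply, LinearMap.add_apply, P.bracket_B_e_L hθ,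
    P.bracket_d_S_L hθ]
  linear_combination (norm := module) heL + hSL + hdBT + (-1 : ℚ) ^ m • P.SL θ (G.d ρ)
    + P.SL (G.d θ) ρ - hSδ - hLθρ

end CartanCalculus

/-- For a homotopy Cartan calculus `(𝔤, ℋ, e, L, S, T)`, the Lie
derivative `L : 𝔤 → ℋ` is a morphism of differential graded Lie algebras:
`d (L θ) = L (δ θ)` and `[L θ, L ρ] = L [θ, ρ]` for all `θ, ρ ∈ 𝔤`. -/
theorem cartan_L_is_dgla_morphism (G : DGLie) (H : MixedDGLie) (P : CartanCalculus G H) :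
    (∀ θ : G.M, H.d (P.L θ) = P.L (G.d θ)) ∧
    (∀ θ ρ : G.M, H.bracket (P.L θ) (P.L ρ) = P.L (G.bracket θ ρ)) := by
  refine ⟨P.d_L, fun θ ρ => ?_⟩
  have hρ : (H.bracket.flip (P.L ρ)).comp P.L = P.L.comp (G.bracket.flip ρ) :=
    G.linearMap_ext_of_gr fun _ θ hθ => P.bracket_L_L_of_mem hθ ρ
  exact LinearMap.congr_fun hρ θ
end

section
/- For every θ, ρ ∈ Der(∧V), the derivations e_θ, L_θ of 𝓛 satisfy: L_θ = [s, e_θ]; [d, e_θ] + e_{δθ} = 0 where δθ = [d, θ]; and [e_θ, L_ρ] = e_{[θ,ρ]}. Consequently the tuple (Der(∧V), Der(𝓛), e, L, S = 0, T = 0) is a homotopy Cartan calculus, where Der(𝓛) carries the mixed differential graded Lie algebra structure with differentials [d, −] and [s, −]. -/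
/-- A non-negatively (cohomologically) graded differential graded algebra over `ℚ`,
presented by an internal `ℤ`-grading. -/
structure GDGA where
  A : Type*
  [ring : Ring A]
  [alg : Algebra ℚ A]
  gr : ℤ → Submodule ℚ A
  gr_top : iSup gr = ⊤
  gr_neg : ∀ n : ℤ, n < 0 → gr n = ⊥
  one_mem : (1 : A) ∈ gr 0
  mul_mem : ∀ {m n : ℤ} {a b : A}, a ∈ gr m → b ∈ gr n → a * b ∈ gr (m + n)
  d : A →ₗ[ℚ] A
  d_deg : ∀ {n : ℤ} {a : A}, a ∈ gr n → d a ∈ gr (n + 1)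
  d_sq : ∀ a, d (d a) = 0
  d_leib : ∀ {m : ℤ} {a : A}, a ∈ gr m → ∀ b,
    d (a * b) = d a * b + ((-1 : ℚ) ^ m) • (a * d b)

attribute [instance] GDGA.ring GDGA.alg

/-- A derivation of degree `t` of a graded differential graded algebra. -/
def GDGA.IsDer (D : GDGA) (t : ℤ) (θ : D.A →ₗ[ℚ] D.A) : Prop :=
  (∀ n : ℤ, ∀ a ∈ D.gr n, θ a ∈ D.gr (n + t)) ∧
  ∀ m : ℤ, ∀ a ∈ D.gr m, ∀ b, θ (a * b) = θ a * b + ((-1 : ℚ) ^ (t * m)) • (a * θ b)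

/-- Data of a Sullivan algebra `(∧V, d)` together with the associated model
`𝓛 = ∧V ⊗ ∧V̄` of the free loop space: `φ : ∧V → 𝓛` is the canonical inclusion,
`s` is the degree `-1` derivation with `s v = v̄`, `s v̄ = 0` and `[d, s] = 0`,
and `𝓛` is generated as an algebra by `φ(V)` and `s (φ(V))`. -/
structure SullivanLoop where
  AV : GDGA
  LL : GDGA
  commAV : ∀ {m n : ℤ} {a b : AV.A}, a ∈ AV.gr m → b ∈ AV.gr n →
    a * b = ((-1 : ℚ) ^ (m * n)) • (b * a)
  commLL : ∀ {m n : ℤ} {a b : LL.A}, a ∈ LL.gr m → b ∈ LL.gr n →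
    a * b = ((-1 : ℚ) ^ (m * n)) • (b * a)
  V : Submodule ℚ AV.A
  V_gen : Algebra.adjoin ℚ (V : Set AV.A) = ⊤
  φ : AV.A →ₐ[ℚ] LL.A
  φ_gr : ∀ n : ℤ, ∀ a ∈ AV.gr n, φ a ∈ LL.gr n
  φ_d : ∀ a, LL.d (φ a) = φ (AV.d a)
  s : LL.A →ₗ[ℚ] LL.A
  s_der : LL.IsDer (-1) s
  s_sq : ∀ x, s (s x) = 0
  d_s : ∀ x, LL.d (s x) + s (LL.d x) = 0
  gen : Algebra.adjoin ℚ
    ((⇑φ '' (V : Set AV.A)) ∪ ((fun v => s (φ v)) '' (V : Set AV.A))) = ⊤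

/-- The derivation `L_θ` of `𝓛` associated to a derivation `θ` of `∧V` of degree
`t`: it is the derivation of degree `t` with `L_θ v = θ v` and
`L_θ v̄ = (-1)^{deg θ} s (θ v)`. -/
def SullivanLoop.IsLSul (S : SullivanLoop) (t : ℤ) (θ : S.AV.A →ₗ[ℚ] S.AV.A)
    (F : S.LL.A →ₗ[ℚ] S.LL.A) : Prop :=
  S.LL.IsDer t F ∧ (∀ v ∈ S.V, F (S.φ v) = S.φ (θ v)) ∧
    ∀ v ∈ S.V, F (S.s (S.φ v)) = ((-1 : ℚ) ^ t) • S.s (S.φ (θ v))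

/-- The contraction `e_θ` of `𝓛` associated to a derivation `θ` of `∧V` of degree
`t`: it is the derivation of degree `t + 1` with `e_θ v = 0` and
`e_θ v̄ = (-1)^{deg θ} θ v`. -/
def SullivanLoop.IsESul (S : SullivanLoop) (t : ℤ) (θ : S.AV.A →ₗ[ℚ] S.AV.A)
    (F : S.LL.A →ₗ[ℚ] S.LL.A) : Prop :=
  S.LL.IsDer (t + 1) F ∧ (∀ v ∈ S.V, F (S.φ v) = 0) ∧
    ∀ v ∈ S.V, F (S.s (S.φ v)) = ((-1 : ℚ) ^ t) • S.φ (θ v)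

/-!
Each identity compares two derivations of `𝓛` of the same degree, and a derivation of `𝓛` is
determined by its values on the generators `v` and `v̄ = s v`, where both sides are computed
directly. The values needed beyond the defining ones (`e_θ` and `L_ρ` on `∧V`, `e_θ` on `s(∧V)`)
are determined in the same way by their values on `V`, as derivations along the inclusion
`∧V → 𝓛`.
-/

section NegOnePow

variable {α : Type*} [DivisionRing α]

theorem neg_one_zpow_add (a b : ℤ) : (-1 : α) ^ (a + b) = (-1) ^ a * (-1) ^ b :=
  zpow_add₀ (neg_ne_zero.mpr one_ne_zero) a b

theorem neg_one_zpow_congr {a b : ℤ} (h : Even (a - b)) : (-1 : α) ^ a = (-1) ^ b := by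
  rw [show a = (a - b) + b by ring, neg_one_zpow_add, h.neg_one_zpow, one_mul]

theorem neg_one_zpow_mul_self (a : ℤ) : (-1 : α) ^ a * (-1) ^ a = 1 := by
  rw [← neg_one_zpow_add, (Even.add_self a).neg_one_zpow]

theorem neg_one_zpow_add_one (a : ℤ) : (-1 : α) ^ (a + 1) = -(-1) ^ a := by
  rw [neg_one_zpow_add, zpow_one, mul_neg_one]

end NegOnePow

namespace GDGA

def IsDerAlong (D : GDGA) {B : Type*} [Ring B] [Algebra ℚ B] (φ : D.A →ₐ[ℚ] B) (k : ℤ)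
    (F : D.A →ₗ[ℚ] B) : Prop :=
  ∀ m : ℤ, ∀ a ∈ D.gr m, ∀ b, F (a * b) = F a * φ b + ((-1 : ℚ) ^ (k * m)) • (φ a * F b)

section IsDerAlong

variable {D : GDGA} {B : Type*} [Ring B] [Algebra ℚ B] {φ : D.A →ₐ[ℚ] B} {k : ℤ}
  {F G : D.A →ₗ[ℚ] B}

theorem IsDerAlong.sub (hF : D.IsDerAlong φ k F) (hG : D.IsDerAlong φ k G) :
    D.IsDerAlong φ k (F - G) := fun m a ha b => by
  simp only [LinearMap.sub_apply, hF m a ha b, hG m a ha b, sub_mul, mul_sub, smul_sub]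
  abel

theorem IsDerAlong.smul (hF : D.IsDerAlong φ k F) (c : ℚ) : D.IsDerAlong φ k (c • F) :=
  fun m a ha b => by
    simp only [LinearMap.smul_apply, hF m a ha b, smul_mul_assoc, mul_smul_comm]
    module

theorem IsDerAlong.map_one (hF : D.IsDerAlong φ k F) : F 1 = 0 := by
  have h := hF 0 1 D.one_mem 1
  simp only [mul_one, mul_zero, zpow_zero, one_smul] at h
  simpa using h

theorem IsDerAlong.map_mul_of_map_eq_zero (hF : D.IsDerAlong φ k F) (a : D.A) {b : D.A}
    (hb : F b = 0) : F (a * b) = F a * φ b := by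
  have ha : a ∈ ⨆ n, D.gr n := D.gr_top ▸ Submodule.mem_top
  induction ha using Submodule.iSup_induction' with
  | mem m a ha => rw [hF m a ha b, hb, mul_zero, smul_zero, add_zero]
  | zero => simp
  | add x y _ _ hx hy => rw [add_mul, map_add, map_add, add_mul, hx, hy]

theorem IsDerAlong.eq_zero (hF : D.IsDerAlong φ k F) {s : Set D.A}
    (hs : Algebra.adjoin ℚ s = ⊤) (h : ∀ x ∈ s, F x = 0) : F = 0 := by
  refine LinearMap.ext fun x => ?_
  have hx : x ∈ Algebra.adjoin ℚ s := hs ▸ Algebra.mem_top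
  rw [LinearMap.zero_apply]
  induction hx using Algebra.adjoin_induction with
  | mem x hx => exact h x hx
  | algebraMap c => rw [Algebra.algebraMap_eq_smul_one, map_smul, hF.map_one, smul_zero]
  | add x y _ _ hx hy => rw [map_add, hx, hy, add_zero]
  | mul x y _ _ hx hy => rw [hF.map_mul_of_map_eq_zero x hy, hx, zero_mul]

theorem IsDerAlong.ext (hF : D.IsDerAlong φ k F) (hG : D.IsDerAlong φ k G) {s : Set D.A}
    (hs : Algebra.adjoin ℚ s = ⊤) (h : ∀ x ∈ s, F x = G x) : F = G :=
  sub_eq_zero.mp <| (hF.sub hG).eq_zero hs fun x hx => sub_eq_zero.mpr (h x hx)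

end IsDerAlong

section IsDer

variable {D : GDGA} {k l : ℤ} {F G : D.A →ₗ[ℚ] D.A}

theorem isDer_d (D : GDGA) : D.IsDer 1 D.d :=
  ⟨fun _ _ ha => D.d_deg ha, fun m a ha b => by rw [D.d_leib ha b, one_mul]⟩

theorem IsDer.add (hF : D.IsDer k F) (hG : D.IsDer k G) : D.IsDer k (F + G) := by
  refine ⟨fun n a ha => add_mem (hF.1 n a ha) (hG.1 n a ha), fun m a ha b => ?_⟩
  simp only [LinearMap.add_apply, hF.2 m a ha b, hG.2 m a ha b, add_mul, mul_add, smul_add]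
  abel

theorem IsDer.sub (hF : D.IsDer k F) (hG : D.IsDer k G) : D.IsDer k (F - G) := by
  refine ⟨fun n a ha => sub_mem (hF.1 n a ha) (hG.1 n a ha), fun m a ha b => ?_⟩
  simp only [LinearMap.sub_apply, hF.2 m a ha b, hG.2 m a ha b, sub_mul, mul_sub, smul_sub]
  abel

theorem IsDer.bracket (hF : D.IsDer k F) (hG : D.IsDer l G) :
    D.IsDer (k + l) (F ∘ₗ G - ((-1 : ℚ) ^ (k * l)) • (G ∘ₗ F)) := by
  obtain ⟨hFd, hFl⟩ := hF
  obtain ⟨hGd, hGl⟩ := hG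
  refine ⟨fun n a ha => ?_, fun m a ha b => ?_⟩
  · simp only [LinearMap.sub_apply, LinearMap.smul_apply, LinearMap.comp_apply]
    refine sub_mem ?_ (Submodule.smul_mem _ _ ?_)
    · simpa only [add_assoc, add_comm l] using hFd _ _ (hGd n a ha)
    · simpa only [add_assoc] using hGd _ _ (hFd n a ha)
  · simp only [LinearMap.sub_apply, LinearMap.smul_apply, LinearMap.comp_apply]
    rw [hGl m a ha b, map_add, map_smul, hFl m a ha b, map_add, map_smul,
      hFl _ _ (hGd m a ha) b, hFl m a ha (G b), hGl _ _ (hFd m a ha) b, hGl m a ha (F b),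
      show k * (m + l) = k * m + k * l by ring, show l * (m + k) = l * m + k * l by ring,
      show (k + l) * m = k * m + l * m by ring, neg_one_zpow_add, neg_one_zpow_add,
      neg_one_zpow_add]
    simp only [mul_sub, sub_mul, smul_sub, smul_smul, smul_mul_assoc, mul_smul_comm]
    -- the two terms `F a * G b` cancel because `(-1) ^ (k * l) * (-1) ^ (k * l) = 1`
    match_scalars <;> first
      | ring1
      | linear_combination (-((-1 : ℚ) ^ (l * m))) * neg_one_zpow_mul_self (α := ℚ) (k * l)

theorem IsDer.isDerAlong_id (hF : D.IsDer k F) : D.IsDerAlong (AlgHom.id ℚ D.A) k F :=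
  fun m a ha b => by simpa using hF.2 m a ha b

theorem IsDer.isDerAlong_map {B : Type*} [Ring B] [Algebra ℚ B] (φ : D.A →ₐ[ℚ] B)
    (hF : D.IsDer k F) : D.IsDerAlong φ k (φ.toLinearMap ∘ₗ F) :=
  fun m a ha b => by simp [hF.2 m a ha b]

end IsDer

section GradedMap

variable {D₁ D₂ : GDGA} {φ : D₁.A →ₐ[ℚ] D₂.A} {k : ℤ} {e s : D₂.A →ₗ[ℚ] D₂.A}

theorem IsDer.isDerAlong_comp (hφ : ∀ n, ∀ a ∈ D₁.gr n, φ a ∈ D₂.gr n) (he : D₂.IsDer k e) :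
    D₁.IsDerAlong φ k (e ∘ₗ φ.toLinearMap) :=
  fun m a ha b => by simpa using he.2 m (φ a) (hφ m a ha) (φ b)

theorem IsDer.isDerAlong_comp_comp (hφ : ∀ n, ∀ a ∈ D₁.gr n, φ a ∈ D₂.gr n)
    (he : D₂.IsDer (k + 1) e) (hs : D₂.IsDer (-1) s) (he₀ : ∀ a, e (φ a) = 0) :
    D₁.IsDerAlong φ k (e ∘ₗ s ∘ₗ φ.toLinearMap) :=
  fun m a ha b => by
    have hsa : s (φ a) ∈ D₂.gr (m + -1) := hs.1 m (φ a) (hφ m a ha)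
    simp only [LinearMap.comp_apply, AlgHom.toLinearMap_apply, map_mul]
    rw [hs.2 m (φ a) (hφ m a ha), map_add, map_smul, he.2 _ _ hsa, he.2 m _ (hφ m a ha),
      he₀, he₀, mul_zero, smul_zero, add_zero, zero_mul, zero_add, smul_smul,
      ← neg_one_zpow_add, show -1 * m + (k + 1) * m = k * m by ring]

end GradedMap

end GDGA

namespace SullivanLoop

open GDGA

theorem eq_zero_of_isDer (S : SullivanLoop) {k : ℤ} {F : S.LL.A →ₗ[ℚ] S.LL.A}
    (hF : S.LL.IsDer k F) (hφ : ∀ v ∈ S.V, F (S.φ v) = 0)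
    (hs : ∀ v ∈ S.V, F (S.s (S.φ v)) = 0) : F = 0 :=
  hF.isDerAlong_id.eq_zero S.gen <| by
    rintro _ (⟨v, hv, rfl⟩ | ⟨v, hv, rfl⟩)
    exacts [hφ v hv, hs v hv]

variable {S : SullivanLoop} {t r : ℤ} {θ ρ : S.AV.A →ₗ[ℚ] S.AV.A}
  {e L : S.LL.A →ₗ[ℚ] S.LL.A}

theorem IsESul.apply_φ (he : S.IsESul t θ e) (a : S.AV.A) : e (S.φ a) = 0 := by
  simpa using LinearMap.congr_fun
    ((he.1.isDerAlong_comp S.φ_gr).eq_zero S.V_gen fun v hv => he.2.1 v hv) a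

theorem IsLSul.apply_φ (hL : S.IsLSul r ρ L) (hρ : S.AV.IsDer r ρ) (a : S.AV.A) :
    L (S.φ a) = S.φ (ρ a) := by
  simpa using LinearMap.congr_fun
    ((hL.1.isDerAlong_comp S.φ_gr).ext (hρ.isDerAlong_map S.φ) S.V_gen
      fun v hv => hL.2.1 v hv) a

theorem IsESul.apply_s_φ (he : S.IsESul t θ e) (hθ : S.AV.IsDer t θ) (a : S.AV.A) :
    e (S.s (S.φ a)) = ((-1 : ℚ) ^ t) • S.φ (θ a) := by
  simpa using LinearMap.congr_fun
    ((he.1.isDerAlong_comp_comp S.φ_gr S.s_der he.apply_φ).ext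
      ((hθ.isDerAlong_map S.φ).smul _) S.V_gen fun v hv => he.2.2 v hv) a

theorem IsLSul.eq_s_comp_add_smul_comp_s (hL : S.IsLSul t θ L) (he : S.IsESul t θ e) :
    L = S.s ∘ₗ e + ((-1 : ℚ) ^ t) • (e ∘ₗ S.s) := by
  have hsign : (-1 : ℚ) ^ (-1 * (t + 1)) = -(-1) ^ t := by
    rw [neg_one_zpow_congr (b := t + 1) ⟨-(t + 1), by ring⟩, neg_one_zpow_add_one]
  have hbr := S.s_der.bracket he.1
  rw [show -1 + (t + 1) = t by ring, hsign] at hbr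
  have h := S.eq_zero_of_isDer (hbr.sub hL.1) (fun v hv => ?_) fun v hv => ?_
  · rw [← sub_eq_zero.mp h]
    module
  · simp only [LinearMap.sub_apply, LinearMap.smul_apply, LinearMap.comp_apply, he.2.1 v hv,
      he.2.2 v hv, hL.2.1 v hv, map_zero, smul_smul, neg_mul, neg_one_zpow_mul_self]
    module
  · simp only [LinearMap.sub_apply, LinearMap.smul_apply, LinearMap.comp_apply, he.2.2 v hv,
      hL.2.2 v hv, S.s_sq, map_zero, map_smul, smul_zero, sub_zero, sub_self]

theorem IsESul.d_comp_add_smul_comp_d_add_eq_zero (he : S.IsESul t θ e)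
    (hθ : S.AV.IsDer t θ) {eδ : S.LL.A →ₗ[ℚ] S.LL.A}
    (heδ : S.IsESul (t + 1) (S.AV.d ∘ₗ θ - ((-1 : ℚ) ^ t) • (θ ∘ₗ S.AV.d)) eδ) :
    S.LL.d ∘ₗ e + ((-1 : ℚ) ^ t) • (e ∘ₗ S.LL.d) + eδ = 0 := by
  have hbr := S.LL.isDer_d.bracket he.1
  rw [show 1 + (t + 1) = t + 1 + 1 by ring, one_mul] at hbr
  have h := S.eq_zero_of_isDer (hbr.add heδ.1) (fun v hv => ?_) fun v hv => ?_
  · rw [← h, neg_one_zpow_add_one]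
    module
  · simp only [LinearMap.add_apply, LinearMap.sub_apply, LinearMap.smul_apply,
      LinearMap.comp_apply, he.2.1 v hv, heδ.2.1 v hv, S.φ_d, he.apply_φ, map_zero,
      smul_zero, sub_zero, add_zero]
  · have hds : S.LL.d (S.s (S.φ v)) = -S.s (S.φ (S.AV.d v)) := by
      rw [eq_neg_iff_add_eq_zero, ← S.φ_d, S.d_s]
    simp only [LinearMap.add_apply, LinearMap.sub_apply, LinearMap.smul_apply,
      LinearMap.comp_apply, he.2.2 v hv, heδ.2.2 v hv, hds, map_smul, map_neg, S.φ_d,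
      he.apply_s_φ hθ, map_sub, neg_one_zpow_add_one, smul_sub, smul_neg, neg_smul, smul_smul]
    module

theorem IsESul.comp_sub_smul_comp_eq (he : S.IsESul t θ e) (hθ : S.AV.IsDer t θ)
    (hL : S.IsLSul r ρ L) (hρ : S.AV.IsDer r ρ) {ebr : S.LL.A →ₗ[ℚ] S.LL.A}
    (hebr : S.IsESul (t + r) (θ ∘ₗ ρ - ((-1 : ℚ) ^ (t * r)) • (ρ ∘ₗ θ)) ebr) :
    e ∘ₗ L - ((-1 : ℚ) ^ ((t + 1) * r)) • (L ∘ₗ e) = ebr := by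
  have hbr := he.1.bracket hL.1
  rw [show t + 1 + r = t + r + 1 by ring] at hbr
  refine sub_eq_zero.mp <| S.eq_zero_of_isDer (hbr.sub hebr.1) (fun v hv => ?_) fun v hv => ?_
  · simp only [LinearMap.sub_apply, LinearMap.smul_apply, LinearMap.comp_apply,
      hL.2.1 v hv, he.apply_φ, hebr.2.1 v hv, map_zero, smul_zero, sub_self]
  · simp only [LinearMap.sub_apply, LinearMap.smul_apply, LinearMap.comp_apply,
      hL.2.2 v hv, he.2.2 v hv, hebr.2.2 v hv, map_smul, he.apply_s_φ hθ, hL.apply_φ hρ,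
      map_sub, smul_sub, smul_smul, show (t + 1) * r = t * r + r by ring, neg_one_zpow_add]
    match_scalars <;> ring

end SullivanLoop

theorem sullivan_homotopy_cartan_general (S : SullivanLoop)
    (t r : ℤ) (θ ρ : S.AV.A →ₗ[ℚ] S.AV.A)
    (hθ : S.AV.IsDer t θ) (hρ : S.AV.IsDer r ρ)
    (Lθ eθ Lρ eδ ebr : S.LL.A →ₗ[ℚ] S.LL.A)
    (hLθ : S.IsLSul t θ Lθ) (heθ : S.IsESul t θ eθ) (hLρ : S.IsLSul r ρ Lρ)
    -- `e` applied to the differential `δθ = [d, θ]` of `θ` in `Der(∧V)`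
    (heδ : S.IsESul (t + 1) (S.AV.d ∘ₗ θ - ((-1 : ℚ) ^ t) • (θ ∘ₗ S.AV.d)) eδ)
    -- `e` applied to the bracket `[θ, ρ]` in `Der(∧V)`
    (hebr : S.IsESul (t + r) (θ ∘ₗ ρ - ((-1 : ℚ) ^ (t * r)) • (ρ ∘ₗ θ)) ebr) :
    Lθ = S.s ∘ₗ eθ + ((-1 : ℚ) ^ t) • (eθ ∘ₗ S.s)
      ∧ S.LL.d ∘ₗ eθ + ((-1 : ℚ) ^ t) • (eθ ∘ₗ S.LL.d) + eδ = 0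
      ∧ eθ ∘ₗ Lρ - ((-1 : ℚ) ^ ((t + 1) * r)) • (Lρ ∘ₗ eθ) = ebr :=
  ⟨hLθ.eq_s_comp_add_smul_comp_s heθ, heθ.d_comp_add_smul_comp_d_add_eq_zero hθ heδ,
    heθ.comp_sub_smul_comp_eq hθ hLρ hρ hebr⟩

/-- For derivations `θ, ρ` of the Sullivan algebra `(∧V, d)`
(with `V¹ = 0`), the derivations `e_θ, L_θ` of `𝓛 = ∧V ⊗ ∧V̄` satisfy
`L_θ = [s, e_θ]`, `[d, e_θ] + e_{δθ} = 0` (where `δθ = [d, θ]`) and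
`[e_θ, L_ρ] = e_{[θ, ρ]}`; consequently
`(Der(∧V), Der(𝓛), e, L, S = 0, T = 0)` is a homotopy Cartan calculus. -/
theorem sullivan_homotopy_cartan (S : SullivanLoop)
    (hV1 : S.V ⊓ S.AV.gr 1 = ⊥)
    (t r : ℤ) (θ ρ : S.AV.A →ₗ[ℚ] S.AV.A)
    (hθ : S.AV.IsDer t θ) (hρ : S.AV.IsDer r ρ)
    (Lθ eθ Lρ eδ ebr : S.LL.A →ₗ[ℚ] S.LL.A)
    (hLθ : S.IsLSul t θ Lθ) (heθ : S.IsESul t θ eθ) (hLρ : S.IsLSul r ρ Lρ)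
    -- `e` applied to the differential `δθ = [d, θ]` of `θ` in `Der(∧V)`
    (heδ : S.IsESul (t + 1) (S.AV.d ∘ₗ θ - ((-1 : ℚ) ^ t) • (θ ∘ₗ S.AV.d)) eδ)
    -- `e` applied to the bracket `[θ, ρ]` in `Der(∧V)`
    (hebr : S.IsESul (t + r) (θ ∘ₗ ρ - ((-1 : ℚ) ^ (t * r)) • (ρ ∘ₗ θ)) ebr) :
    Lθ = S.s ∘ₗ eθ + ((-1 : ℚ) ^ t) • (eθ ∘ₗ S.s)
      ∧ S.LL.d ∘ₗ eθ + ((-1 : ℚ) ^ t) • (eθ ∘ₗ S.LL.d) + eδ = 0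
      ∧ eθ ∘ₗ Lρ - ((-1 : ℚ) ^ ((t + 1) * r)) • (Lρ ∘ₗ eθ) = ebr :=
  sullivan_homotopy_cartan_general S t r θ ρ hθ hρ Lθ eθ Lρ eδ ebr hLθ heθ hLρ heδ hebr
end

section
/- Let (∧V, d) be a Sullivan algebra with V¹ = 0 and θ ∈ Der(∧V). Then Θ∘L_θ = L_θ∘Θ as maps C_*(∧V) → 𝓛, where on the left L_θ denotes the Hochschild-complex Lie derivative and on the right the Sullivan-model derivation of 𝓛. -/
/-- The sign exponent `ε_i = |a₀| + ∑_{j<i} |s a_j|` attached to a word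
`a₀[a₁|⋯|aₙ]` with `|a₀| = n0` and `|a_j|` listed in `ds`. -/
def eps (n0 : ℤ) (ds : List ℤ) (i : ℕ) : ℤ :=
  n0 + (((ds.take i).map (fun n => n - 1)).sum)

/-- The (normalized) Hochschild chain complex `C_*(A) = (A ⊗ T(s Ā), d₁ + d₂)`
of an augmented DGA `(A, d)`, presented axiomatically: `elt a₀ [a₁, …, aₙ]`
denotes the elementary tensor `a₀[a₁|⋯|aₙ]`; such tensors with homogeneous
entries in the augmentation ideal span `C`, and the operators `d₁`, `d₂`,
the cyclic operator `t`, the extra degeneracy `s` and Connes' operator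
`B = s ∘ (1 + t + ⋯ + tⁿ)` are determined by the usual formulas on them. -/
structure Hochschild (D : GDGA) where
  C : Type*
  [grp : AddCommGroup C]
  [mod : Module ℚ C]
  aug : D.A →ₐ[ℚ] ℚ
  aug_d : ∀ a, aug (D.d a) = 0
  elt : D.A → List D.A → C
  spanning : ∀ x : C, x ∈ Submodule.span ℚ
      {y : C | ∃ (n0 : ℤ) (a0 : D.A) (raw : List D.A) (ds : List ℤ),
        a0 ∈ D.gr n0 ∧ List.Forall₂ (fun a k => a ∈ D.gr k ∧ aug a = 0) raw ds ∧
        y = elt a0 raw}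
  d1 : C →ₗ[ℚ] C
  d2 : C →ₗ[ℚ] C
  t : C →ₗ[ℚ] C
  sC : C →ₗ[ℚ] C
  Bo : C →ₗ[ℚ] C
  d1_mk : ∀ (n0 : ℤ) (a0 : D.A), a0 ∈ D.gr n0 →
    ∀ (raw : List D.A) (ds : List ℤ),
      List.Forall₂ (fun a k => a ∈ D.gr k ∧ aug a = 0) raw ds →
      d1 (elt a0 raw) = elt (D.d a0) raw
        + ∑ i ∈ Finset.range raw.length,
            ((-1 : ℚ) ^ (eps n0 ds i + 1)) • elt a0 (raw.set i (D.d (raw.getD i 0)))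
  d2_nil : ∀ a0 : D.A, d2 (elt a0 []) = 0
  d2_mk : ∀ (n0 : ℤ) (a0 : D.A), a0 ∈ D.gr n0 →
    ∀ (raw : List D.A) (ds : List ℤ),
      List.Forall₂ (fun a k => a ∈ D.gr k ∧ aug a = 0) raw ds → raw ≠ [] →
      d2 (elt a0 raw) =
        ((-1 : ℚ) ^ n0) • elt (a0 * raw.getD 0 1) raw.tail
        + (∑ j ∈ Finset.range (raw.length - 1),
            ((-1 : ℚ) ^ (eps n0 ds (j + 1))) •
              elt a0 (raw.take j ++ (raw.getD j 1 * raw.getD (j + 1) 1) :: raw.drop (j + 2)))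
        + ((-1 : ℚ) ^ (eps n0 ds (raw.length - 1) * ((ds.getLast?).getD 0 - 1) + 1)) •
            elt ((raw.getLast?).getD 1 * a0) raw.dropLast
  t_nil : ∀ a0 : D.A, t (elt a0 []) = elt a0 []
  t_mk : ∀ (n0 : ℤ) (a0 : D.A), a0 ∈ D.gr n0 →
    ∀ (raw : List D.A) (ds : List ℤ),
      List.Forall₂ (fun a k => a ∈ D.gr k ∧ aug a = 0) raw ds → raw ≠ [] →
      t (elt a0 raw) =
        ((-1 : ℚ) ^ ((((ds.getLast?).getD 0) - 1) * (eps n0 ds (raw.length - 1) + 1))) •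
          elt ((raw.getLast?).getD 1) (a0 :: raw.dropLast)
  sC_mk : ∀ (a0 : D.A) (raw : List D.A), sC (elt a0 raw) = elt 1 (a0 :: raw)
  Bo_mk : ∀ (a0 : D.A) (raw : List D.A),
    Bo (elt a0 raw) = ∑ k ∈ Finset.range (raw.length + 1), sC ((⇑t)^[k] (elt a0 raw))

attribute [instance] Hochschild.grp Hochschild.mod

/-- A `φ`-derivation `θ : A → A'` of degree `t` along a morphism of DGAs
`φ : A → A'`. -/
def IsDer₂ (D D' : GDGA) (φ : D.A →ₐ[ℚ] D'.A) (t : ℤ) (θ : D.A →ₗ[ℚ] D'.A) : Prop :=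
  (∀ n : ℤ, ∀ a ∈ D.gr n, θ a ∈ D'.gr (n + t)) ∧
  ∀ m : ℤ, ∀ a ∈ D.gr m, ∀ b,
    θ (a * b) = θ a * φ b + ((-1 : ℚ) ^ (t * m)) • (φ a * θ b)

/-- `F` is the Lie derivative operator `L_θ : C_*(A) → C_*(A')` of a
`φ`-derivation `θ` of degree `t`. -/
def IsLop (D D' : GDGA) (M : Hochschild D) (M' : Hochschild D') (φ : D.A →ₐ[ℚ] D'.A)
    (t : ℤ) (θ : D.A →ₗ[ℚ] D'.A) (F : M.C →ₗ[ℚ] M'.C) : Prop :=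
  ∀ (n0 : ℤ) (a0 : D.A), a0 ∈ D.gr n0 →
    ∀ (raw : List D.A) (ds : List ℤ),
      List.Forall₂ (fun a k => a ∈ D.gr k ∧ M.aug a = 0) raw ds →
      F (M.elt a0 raw) = M'.elt (θ a0) (raw.map ⇑φ)
        + ∑ i ∈ Finset.range raw.length,
            ((-1 : ℚ) ^ (t * (eps n0 ds i + 1))) •
              M'.elt (φ a0) ((raw.map ⇑φ).set i (θ (raw.getD i 0)))

/-- `F` is the contraction operator `e_θ : C_*(A) → C_*(A')` of a
`φ`-derivation `θ` of degree `t`. -/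
def IsEop (D D' : GDGA) (M : Hochschild D) (M' : Hochschild D') (φ : D.A →ₐ[ℚ] D'.A)
    (t : ℤ) (θ : D.A →ₗ[ℚ] D'.A) (F : M.C →ₗ[ℚ] M'.C) : Prop :=
  (∀ a0 : D.A, F (M.elt a0 []) = 0) ∧
  ∀ (n0 : ℤ) (a0 : D.A), a0 ∈ D.gr n0 →
    ∀ (raw : List D.A) (ds : List ℤ),
      List.Forall₂ (fun a k => a ∈ D.gr k ∧ M.aug a = 0) raw ds → raw ≠ [] →
      F (M.elt a0 raw) = ((-1 : ℚ) ^ (t * n0 + t + n0)) •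
        M'.elt (φ a0 * θ (raw.getD 0 0)) (raw.tail.map ⇑φ)

/-- `F` is the homotopy operator
`S_θ = ∑_{j=1}^n (∑_{k=0}^{n-j} s ∘ tᵏ) ∘ L_{θ,j} : C_*(A) → C_*(A')` of a
`φ`-derivation `θ` of degree `t`. -/
def IsSop (D D' : GDGA) (M : Hochschild D) (M' : Hochschild D') (φ : D.A →ₐ[ℚ] D'.A)
    (t : ℤ) (θ : D.A →ₗ[ℚ] D'.A) (F : M.C →ₗ[ℚ] M'.C) : Prop :=
  (∀ a0 : D.A, F (M.elt a0 []) = 0) ∧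
  ∀ (n0 : ℤ) (a0 : D.A), a0 ∈ D.gr n0 →
    ∀ (raw : List D.A) (ds : List ℤ),
      List.Forall₂ (fun a k => a ∈ D.gr k ∧ M.aug a = 0) raw ds →
      F (M.elt a0 raw) =
        ∑ j ∈ Finset.range raw.length, ∑ k ∈ Finset.range (raw.length - j),
          ((-1 : ℚ) ^ (t * (eps n0 ds j + 1))) •
            M'.sC ((⇑M'.t)^[k]
              (M'.elt (φ a0) ((raw.map ⇑φ).set j (θ (raw.getD j 0)))))

/-! Both sides are linear, so it suffices to compare them on the spanning tensors
`a₀[a₁|⋯|aₙ]`. There `L_θ ∘ Θ` is expanded by the Leibniz rule along the product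
`a₀ (s a₁) ⋯ (s aₙ)`, and it matches `Θ ∘ L_θ` term by term because the derivation `L_θ` of `𝓛`
restricts to `θ` on `∧V` and satisfies `L_θ ∘ s = (-1)^{deg θ} s ∘ L_θ`. Both identities hold
because a derivation vanishing on algebra generators vanishes; for the second one applies this to
the graded commutator `[L_θ, s]`, which is again a derivation. -/

theorem List.prod_set_smul {R A : Type*} [CommSemiring R] [Semiring A] [Algebra R A]
    (L : List A) {i : ℕ} (hi : i < L.length) (c : R) (y : A) :
    (L.set i (c • y)).prod = c • (L.set i y).prod := by
  rw [List.prod_set, List.prod_set, if_pos hi, if_pos hi, mul_smul_comm, smul_mul_assoc]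

namespace IsDer₂

variable {D D' : GDGA} {φ : D.A →ₐ[ℚ] D'.A} {t : ℤ} {θ θ' : D.A →ₗ[ℚ] D'.A}

theorem sub (h : IsDer₂ D D' φ t θ) (h' : IsDer₂ D D' φ t θ') :
    IsDer₂ D D' φ t (θ - θ') := by
  refine ⟨fun n a ha => sub_mem (h.1 n a ha) (h'.1 n a ha), fun m a ha b => ?_⟩
  rw [LinearMap.sub_apply, h.2 m a ha b, h'.2 m a ha b, LinearMap.sub_apply, LinearMap.sub_apply,
    sub_mul, mul_sub, smul_sub]
  abel

theorem map_one_eq_zero (h : IsDer₂ D D' φ t θ) : θ 1 = 0 := by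
  have h1 := h.2 0 1 D.one_mem 1
  rw [mul_one, _root_.map_one φ, mul_one, mul_zero, zpow_zero, one_smul, one_mul] at h1
  simpa using h1

theorem map_mul_of_map_eq_zero (h : IsDer₂ D D' φ t θ) {b : D.A} (hb : θ b = 0) (a : D.A) :
    θ (a * b) = θ a * φ b := by
  have ha : a ∈ ⨆ n, D.gr n := by rw [D.gr_top]; trivial
  refine Submodule.iSup_induction (motive := fun a => θ (a * b) = θ a * φ b) _ ha ?_ ?_ ?_
  · intro m a ha
    rw [h.2 m a ha b, hb, mul_zero, smul_zero, add_zero]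
  · simp
  · intro x y hx hy
    rw [add_mul, map_add, hx, hy, map_add, add_mul]

theorem eq_zero_of_adjoin_eq_top (h : IsDer₂ D D' φ t θ) {s : Set D.A}
    (hs : Algebra.adjoin ℚ s = ⊤) (hθs : ∀ x ∈ s, θ x = 0) : θ = 0 := by
  ext a
  have ha : a ∈ Algebra.adjoin ℚ s := hs ▸ trivial
  rw [LinearMap.zero_apply]
  induction ha using Algebra.adjoin_induction with
  | mem x hx => exact hθs x hx
  | algebraMap r => rw [Algebra.algebraMap_eq_smul_one, map_smul, h.map_one_eq_zero, smul_zero]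
  | add x y _ _ hx hy => rw [map_add, hx, hy, add_zero]
  | mul x y _ _ _ hy => rw [h.map_mul_of_map_eq_zero hy, ‹θ x = 0›, zero_mul]

theorem ext_of_adjoin_eq_top (h : IsDer₂ D D' φ t θ) (h' : IsDer₂ D D' φ t θ') {s : Set D.A}
    (hs : Algebra.adjoin ℚ s = ⊤) (hθs : ∀ x ∈ s, θ x = θ' x) : θ = θ' :=
  sub_eq_zero.1 <| (h.sub h').eq_zero_of_adjoin_eq_top hs fun x hx => sub_eq_zero.2 (hθs x hx)

end IsDer₂

namespace GDGA.IsDer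

variable {D D' : GDGA} {t u : ℤ} {F G : D.A →ₗ[ℚ] D.A}

theorem isDer₂_id (hF : D.IsDer t F) : IsDer₂ D D (AlgHom.id ℚ D.A) t F := hF

theorem comp_algHom (hF : D.IsDer t F) {φ : D'.A →ₐ[ℚ] D.A}
    (hφ : ∀ n, ∀ a ∈ D'.gr n, φ a ∈ D.gr n) : IsDer₂ D' D φ t (F ∘ₗ φ.toLinearMap) :=
  ⟨fun n a ha => hF.1 n _ (hφ n a ha), fun m a ha b => by
    simp only [LinearMap.comp_apply, AlgHom.toLinearMap_apply, map_mul, hF.2 m _ (hφ m a ha)]⟩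

theorem algHom_comp (hF : D.IsDer t F) {φ : D.A →ₐ[ℚ] D'.A}
    (hφ : ∀ n, ∀ a ∈ D.gr n, φ a ∈ D'.gr n) : IsDer₂ D D' φ t (φ.toLinearMap ∘ₗ F) :=
  ⟨fun n a ha => hφ _ _ (hF.1 n a ha), fun m a ha b => by
    simp only [LinearMap.comp_apply, AlgHom.toLinearMap_apply, hF.2 m a ha, map_add, map_smul,
      map_mul]⟩

theorem commutator (hF : D.IsDer t F) (hG : D.IsDer u G) :
    D.IsDer (t + u) (F ∘ₗ G - ((-1 : ℚ) ^ (t * u)) • (G ∘ₗ F)) := by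
  refine ⟨fun n a ha => ?_, fun m a ha b => ?_⟩
  · refine sub_mem ?_ (Submodule.smul_mem _ _ ?_)
    · simpa only [LinearMap.comp_apply, add_assoc, add_comm u] using hF.1 _ _ (hG.1 n a ha)
    · simpa only [LinearMap.comp_apply, add_assoc] using hG.1 _ _ (hF.1 n a ha)
  have sign_add (k l : ℤ) : (-1 : ℚ) ^ (k + l) = (-1) ^ k * (-1) ^ l := zpow_add₀ (by norm_num) k l
  have sign_sq : (-1 : ℚ) ^ (t * u) * (-1) ^ (t * u) = 1 := by
    rw [← sign_add, ← two_mul, zpow_mul, Even.neg_one_zpow even_two, one_zpow]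
  simp only [LinearMap.sub_apply, LinearMap.smul_apply, LinearMap.comp_apply]
  rw [hG.2 m a ha b, hF.2 m a ha b, map_add, map_add, map_smul, map_smul,
    hF.2 (m + u) (G a) (hG.1 m a ha), hF.2 m a ha (G b), hG.2 (m + t) _ (hF.1 m a ha),
    hG.2 m a ha (F b), mul_add t, mul_add u, add_mul t u m, sign_add, sign_add, sign_add,
    mul_comm u t, mul_comm u m, mul_comm t m, sub_mul, mul_sub, smul_mul_assoc, mul_smul_comm]
  -- the cross terms `G a * F b` cancel on the nose, the terms `F a * G b` up to `(-1)^{2tu} = 1`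
  linear_combination (norm := module) (-(-1 : ℚ) ^ (m * u)) • sign_sq • (F a * G b)

theorem map_mul_list_prod (hF : D.IsDer t F)
    {L : List D.A} {ms : List ℤ} (hL : List.Forall₂ (fun x m => x ∈ D.gr m) L ms)
    {m0 : ℤ} {x0 : D.A} (h0 : x0 ∈ D.gr m0) :
    F (x0 * L.prod) = F x0 * L.prod
      + ∑ i ∈ Finset.range L.length, ((-1 : ℚ) ^ (t * (m0 + (ms.take i).sum))) •
          (x0 * (L.set i (F (L.getD i 0))).prod) := by
  induction hL generalizing m0 x0 with
  | nil => simp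
  | @cons x m L ms hx _ ih =>
    rw [List.prod_cons, ← mul_assoc, ih (D.mul_mem h0 hx), hF.2 m0 x0 h0 x, List.length_cons,
      Finset.sum_range_succ']
    simp only [List.set_cons_succ, List.getD_cons_succ, List.take_succ_cons, List.sum_cons,
      List.prod_cons, List.set_cons_zero, List.getD_cons_zero, List.take_zero, List.sum_nil,
      add_zero, add_assoc, add_mul, smul_mul_assoc, mul_assoc]
    abel

end GDGA.IsDer

namespace SullivanLoop.IsLSul

variable {S : SullivanLoop} {t : ℤ} {θ : S.AV.A →ₗ[ℚ] S.AV.A} {LS : S.LL.A →ₗ[ℚ] S.LL.A}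

theorem map_φ (hθ : S.AV.IsDer t θ) (hLS : S.IsLSul t θ LS) (a : S.AV.A) :
    LS (S.φ a) = S.φ (θ a) :=
  LinearMap.congr_fun ((hLS.1.comp_algHom S.φ_gr).ext_of_adjoin_eq_top
    (hθ.algHom_comp S.φ_gr) S.V_gen hLS.2.1) a

theorem comp_s (hLS : S.IsLSul t θ LS) : LS ∘ₗ S.s = ((-1 : ℚ) ^ t) • (S.s ∘ₗ LS) := by
  have hcomm := hLS.1.commutator S.s_der
  rw [show t * -1 = -t by ring, zpow_neg, ← inv_zpow, inv_neg_one] at hcomm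
  refine sub_eq_zero.1 (hcomm.isDer₂_id.eq_zero_of_adjoin_eq_top S.gen ?_)
  rintro _ (⟨v, hv, rfl⟩ | ⟨v, hv, rfl⟩) <;>
    simp [hLS.2.1 v hv, hLS.2.2 v hv, S.s_sq]

theorem map_s_φ (hθ : S.AV.IsDer t θ) (hLS : S.IsLSul t θ LS) (a : S.AV.A) :
    LS (S.s (S.φ a)) = ((-1 : ℚ) ^ t) • S.s (S.φ (θ a)) := by
  rw [← LinearMap.comp_apply LS, hLS.comp_s, LinearMap.smul_apply, LinearMap.comp_apply,
    hLS.map_φ hθ]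

theorem map_φ_mul_prod_s_φ (hθ : S.AV.IsDer t θ) (hLS : S.IsLSul t θ LS) {n0 : ℤ}
    {a0 : S.AV.A} (h0 : a0 ∈ S.AV.gr n0)
    {raw : List S.AV.A} {ds : List ℤ} (hraw : List.Forall₂ (fun a k => a ∈ S.AV.gr k) raw ds) :
    LS (S.φ a0 * (raw.map fun a => S.s (S.φ a)).prod)
      = S.φ (θ a0) * (raw.map fun a => S.s (S.φ a)).prod
        + ∑ i ∈ Finset.range raw.length, ((-1 : ℚ) ^ (t * (eps n0 ds i + 1))) •
            (S.φ a0 * ((raw.set i (θ (raw.getD i 0))).map fun a => S.s (S.φ a)).prod) := by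
  have hshift : List.Forall₂ (fun x m => x ∈ S.LL.gr m)
      (raw.map fun a => S.s (S.φ a)) (ds.map fun n => n - 1) :=
    List.forall₂_map_left_iff.2 <| List.forall₂_map_right_iff.2 <| hraw.imp fun a k ha => by
      simpa only [sub_eq_add_neg] using S.s_der.1 k _ (S.φ_gr k a ha)
  rw [hLS.1.map_mul_list_prod hshift (S.φ_gr n0 a0 h0), hLS.map_φ hθ, List.length_map]
  refine congrArg _ (Finset.sum_congr rfl fun i hi => ?_)
  have hi : i < raw.length := Finset.mem_range.1 hi
  rw [List.getD_eq_getElem _ _ (by simpa using hi), List.getElem_map, hLS.map_s_φ hθ,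
    List.prod_set_smul _ (by simpa using hi), mul_smul_comm, smul_smul, List.map_set,
    ← List.getD_eq_getElem _ 0 hi, ← zpow_add₀ (by norm_num), eps, List.map_take]
  congr 2
  ring

end SullivanLoop.IsLSul

theorem theta_intertwines_L_general (S : SullivanLoop)
    (M : Hochschild S.AV)
    (t : ℤ) (θ : S.AV.A →ₗ[ℚ] S.AV.A) (hθ : S.AV.IsDer t θ)
    (LH : M.C →ₗ[ℚ] M.C)
    (hLH : IsLop S.AV S.AV M M (AlgHom.id ℚ S.AV.A) t θ LH)
    (LS : S.LL.A →ₗ[ℚ] S.LL.A) (hLS : S.IsLSul t θ LS)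
    (Θ : M.C →ₗ[ℚ] S.LL.A)
    (hΘ : ∀ (a0 : S.AV.A) (raw : List S.AV.A),
      Θ (M.elt a0 raw)
        = ((raw.length.factorial : ℚ))⁻¹ •
            (S.φ a0 * (raw.map (fun a => S.s (S.φ a))).prod)) :
    Θ ∘ₗ LH = LS ∘ₗ Θ := by
  refine LinearMap.ext_on (Submodule.eq_top_iff'.2 M.spanning) ?_
  rintro _ ⟨n0, a0, raw, ds, h0, hraw, rfl⟩
  simp only [LinearMap.comp_apply, hLH n0 a0 h0 raw ds hraw, AlgHom.coe_id, List.map_id,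
    AlgHom.id_apply, map_add, map_sum, map_smul, hΘ, List.length_set,
    hLS.map_φ_mul_prod_s_φ hθ h0 (hraw.imp fun _ _ h => h.1), smul_add, Finset.smul_sum,
    smul_comm ((raw.length.factorial : ℚ)⁻¹)]

/-- Let `(∧V, d)` be a Sullivan algebra with `V¹ = 0` and
`θ ∈ Der(∧V)`.  Then `Θ ∘ L_θ = L_θ ∘ Θ : C_*(∧V) → 𝓛`, where on the left `L_θ`
is the Hochschild Lie derivative, on the right the Sullivan-model derivation of
`𝓛`, and `Θ (a₀[a₁|⋯|aₙ]) = (1/n!) a₀ (s a₁) ⋯ (s aₙ)`. -/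
theorem theta_intertwines_L (S : SullivanLoop)
    (hV1 : S.V ⊓ S.AV.gr 1 = ⊥)
    (M : Hochschild S.AV)
    (t : ℤ) (θ : S.AV.A →ₗ[ℚ] S.AV.A) (hθ : S.AV.IsDer t θ)
    (LH : M.C →ₗ[ℚ] M.C)
    (hLH : IsLop S.AV S.AV M M (AlgHom.id ℚ S.AV.A) t θ LH)
    (LS : S.LL.A →ₗ[ℚ] S.LL.A) (hLS : S.IsLSul t θ LS)
    (Θ : M.C →ₗ[ℚ] S.LL.A)
    (hΘ : ∀ (a0 : S.AV.A) (raw : List S.AV.A),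
      Θ (M.elt a0 raw)
        = ((raw.length.factorial : ℚ))⁻¹ •
            (S.φ a0 * (raw.map (fun a => S.s (S.φ a))).prod)) :
    Θ ∘ₗ LH = LS ∘ₗ Θ :=
  theta_intertwines_L_general S M t θ hθ LH hLH LS hLS Θ hΘ
end

section
/- Let (∧(x, y), d) be the free graded-commutative algebra over ℚ on generators x of degree 2 and y of degree 5, with dx = 0 and dy = x³ (the minimal Sullivan model of ℂP²). Then: (1) the homology of the complex of negative-degree derivations of (∧(x, y), d) (with differential [d, −]) is two-dimensional, spanned by the classes of the derivations (y, 1) and (y, x) (which send y to 1 and to x respectively, and x to 0), in degrees −5 and −3; and (2) every derivation of negative degree of the graded algebra ℚ[x]/(x³) (with x of degree 2) is zero. In particular, the quasi-isomorphism (∧(x, y), d) → ℚ[x]/(x³) sending x to x and y to 0 does not induce an isomorphism between the homologies of the derivation complexes. -/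
open Polynomial TrivSqZeroExt

/-- The free graded-commutative algebra `∧(x, y)` with `deg x = 2`, `deg y = 5`
(so `y² = 0` and `y` is central), realized as the dual numbers over `ℚ[X]`:
an element `(a, b)` represents `a(x) + b(x)·y`. -/
noncomputable abbrev A18 : Type := DualNumber (Polynomial ℚ)

/-- The generator `x` (degree `2`). -/
noncomputable def xg : A18 := inl Polynomial.X

/-- The generator `y` (degree `5`). -/
noncomputable def yg : A18 := inr 1

/-- The grading of `∧(x, y)`: degree `2k` part spanned by `xᵏ`, degree `2k + 5`
part spanned by `xᵏ y`. -/
noncomputable def gr18 (n : ℤ) : Submodule ℚ A18 :=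
  Submodule.span ℚ
    {a : A18 | (∃ k : ℕ, n = 2 * k ∧ a = inl (Polynomial.X ^ k)) ∨
      (∃ k : ℕ, n = 2 * k + 5 ∧ a = inr (Polynomial.X ^ k))}

/-- The differential with `d x = 0`, `d y = x³` (the minimal Sullivan model of
`ℂP²`): `d (a + b y) = b x³`. -/
noncomputable def d18 : A18 →ₗ[ℚ] A18 where
  toFun a := inl (snd a * Polynomial.X ^ 3)
  map_add' a b := by simp [add_mul]
  map_smul' c a := by simp [smul_mul_assoc]

/-- A derivation of the graded algebra `∧(x, y)` of degree `k`. -/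
def IsDer18 (k : ℤ) (θ : A18 →ₗ[ℚ] A18) : Prop :=
  (∀ n : ℤ, ∀ a ∈ gr18 n, θ a ∈ gr18 (n + k)) ∧
  ∀ m : ℤ, ∀ a ∈ gr18 m, ∀ b, θ (a * b) = θ a * b + ((-1 : ℚ) ^ (k * m)) • (a * θ b)

/-- A coboundary in the complex `(Der(∧(x, y)), [d, -])` of degree `k`. -/
def Bdry18 (k : ℤ) (θ : A18 →ₗ[ℚ] A18) : Prop :=
  ∃ η, IsDer18 (k - 1) η ∧ θ = d18 ∘ₗ η - ((-1 : ℚ) ^ (k - 1)) • (η ∘ₗ d18)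

/-- The derivation `(y, 1)`: `y ↦ 1`, `x ↦ 0` (degree `-5`). -/
noncomputable def th1 : A18 →ₗ[ℚ] A18 where
  toFun a := inl (snd a)
  map_add' a b := by simp
  map_smul' c a := by simp

/-- The derivation `(y, x)`: `y ↦ x`, `x ↦ 0` (degree `-3`). -/
noncomputable def th2 : A18 →ₗ[ℚ] A18 where
  toFun a := inl (Polynomial.X * snd a)
  map_add' a b := by simp [mul_add]
  map_smul' c a := by simp [mul_smul_comm]

/-- The graded algebra `ℚ[x]/(x³)` (with `x` of degree `2` and zero
differential): the rational cohomology of `ℂP²`. -/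
noncomputable abbrev B18 : Type :=
  Polynomial ℚ ⧸ (Ideal.span {(Polynomial.X : Polynomial ℚ) ^ 3})

/-- The grading of `ℚ[x]/(x³)`. -/
noncomputable def grB (n : ℤ) : Submodule ℚ B18 :=
  Submodule.span ℚ
    {b : B18 | ∃ k : ℕ, n = 2 * k ∧
      b = Ideal.Quotient.mk (Ideal.span {(Polynomial.X : Polynomial ℚ) ^ 3})
            (Polynomial.X ^ k)}

/-- A derivation of the graded algebra `ℚ[x]/(x³)` of degree `k`. -/
def IsDerB (k : ℤ) (θ : B18 →ₗ[ℚ] B18) : Prop :=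
  (∀ n : ℤ, ∀ b ∈ grB n, θ b ∈ grB (n + k)) ∧
  ∀ m : ℤ, ∀ a ∈ grB m, ∀ b, θ (a * b) = θ a * b + ((-1 : ℚ) ^ (k * m)) • (a * θ b)

/-!
A derivation of `∧(x, y)` or of `ℚ[x]/(x³)` is determined by its values on the generators,
and in negative degree the grading leaves almost no room for them: `θ x` has degree `2 + k`
and `θ y` degree `5 + k`. For `∧(x, y)` this leaves `θ y ∈ {1, x, x²}` in degrees `-5, -3, -1`
and `θ x ∈ ℚ` in degree `-2`. The cocycle condition at `y` reads `θ (x³) = 3 x² θ x = 0`, which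
kills degree `-2`, and `(y, x²)` is the boundary of `-⅓ ∂/∂x`. There are no nonzero
derivations of degree `-4` or `≤ -6`, so `(y, 1)` and `(y, x)` are not boundaries. In
`ℚ[x]/(x³)` the same computation `0 = θ (x³) = 3 x² θ x` with `x² ≠ 0` kills the only
candidate, in degree `-2`.
-/

lemma map_pow_succ_of_leibniz {R : Type*} [CommSemiring R] (f : R → R) {x : R}
    (hx : ∀ b, f (x * b) = f x * b + x * f b) (n : ℕ) :
    f (x ^ (n + 1)) = (n + 1) • (x ^ n * f x) := by
  induction n with
  | zero => simp
  | succ n ih =>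
    rw [pow_succ', hx, ih, succ_nsmul _ (n + 1)]
    ring

lemma map_aeval_mul_of_leibniz {K R : Type*} [CommSemiring K] [CommSemiring R] [Algebra K R]
    (f : R →ₗ[K] R) {x : R} (hx : ∀ b, f (x * b) = f x * b + x * f b) (h0 : f x = 0)
    (p : K[X]) (b : R) :
    f (aeval x p * b) = aeval x p * f b := by
  induction p using Polynomial.induction_on generalizing b with
  | C a => simp only [aeval_C, ← Algebra.smul_def, map_smul]
  | add p q hp hq => simp only [map_add, add_mul, hp, hq]
  | monomial n a ih =>
    have hX : aeval x (C a * X ^ (n + 1)) = x * aeval x (C a * X ^ n) := by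
      simp only [map_mul, map_pow, aeval_X]
      ring
    rw [hX, mul_assoc, hx, h0, zero_mul, zero_add, ih, mul_assoc]

lemma eq_zero_of_map_pow_succ_eq_zero {K R : Type*} [Field K] [CharZero K] [CommRing R]
    [Algebra K R] [NoZeroSMulDivisors K R] (f : R → R) {x : R}
    (hx : ∀ b, f (x * b) = f x * b + x * f b) {c : K} (hc : f x = c • 1) {n : ℕ}
    (hn : x ^ n ≠ 0) (h : f (x ^ (n + 1)) = 0) : c = 0 := by
  rw [map_pow_succ_of_leibniz f hx, hc, mul_smul_one, ← Nat.cast_smul_eq_nsmul K, smul_smul]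
    at h
  simpa [hn, Nat.cast_add_one_ne_zero] using h

lemma inl_X_pow_mem_gr18 (j : ℕ) : (inl (X ^ j) : A18) ∈ gr18 (2 * j) :=
  Submodule.subset_span (Or.inl ⟨j, rfl, rfl⟩)

lemma inr_X_pow_mem_gr18 (j : ℕ) : (inr (X ^ j) : A18) ∈ gr18 (2 * j + 5) :=
  Submodule.subset_span (Or.inr ⟨j, rfl, rfl⟩)

lemma one_mem_gr18 : (1 : A18) ∈ gr18 0 := by
  simpa using inl_X_pow_mem_gr18 0

lemma xg_mem_gr18 : xg ∈ gr18 2 := by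
  simpa [xg] using inl_X_pow_mem_gr18 1

lemma yg_mem_gr18 : yg ∈ gr18 5 := by
  simpa [yg] using inr_X_pow_mem_gr18 0

lemma xg_pow (n : ℕ) : xg ^ n = inl (X ^ n) := by rw [xg, inl_pow]

lemma d18_yg : d18 yg = xg ^ 3 := by simp [d18, yg, xg_pow]

lemma xg_pow_ne_zero (n : ℕ) : xg ^ n ≠ 0 := by
  rw [xg_pow, Ne, ← inl_zero, inl_injective.eq_iff]
  exact pow_ne_zero n X_ne_zero

lemma gr18_eq_bot {n : ℤ} (h : n < 0 ∨ n = 1 ∨ n = 3) : gr18 n = ⊥ := by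
  rw [gr18, Submodule.span_eq_bot]
  rintro a (⟨k, hk, -⟩ | ⟨k, hk, -⟩) <;> omega

lemma gr18_two_mul (j : ℕ) : gr18 (2 * j) = Submodule.span ℚ {(inl (X ^ j) : A18)} := by
  rw [gr18]
  congr 1
  ext a
  constructor
  · rintro (⟨k, hk, rfl⟩ | ⟨k, hk, -⟩)
    · obtain rfl : k = j := by omega
      rfl
    · omega
  · rintro rfl
    exact Or.inl ⟨j, rfl, rfl⟩

lemma map_mem_gr18_of_monomials (θ : A18 →ₗ[ℚ] A18) (k : ℤ)
    (hx : ∀ j : ℕ, θ (inl (X ^ j)) ∈ gr18 (2 * j + k))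
    (hy : ∀ j : ℕ, θ (inr (X ^ j)) ∈ gr18 (2 * j + 5 + k)) :
    ∀ n : ℤ, ∀ a ∈ gr18 n, θ a ∈ gr18 (n + k) := by
  intro n a ha
  induction ha using Submodule.span_induction with
  | mem a h =>
    obtain ⟨j, rfl, rfl⟩ | ⟨j, rfl, rfl⟩ := h
    exacts [hx j, hy j]
  | zero => simp
  | add a b _ _ ha hb => simpa using add_mem ha hb
  | smul c a _ ha => simpa using Submodule.smul_mem _ c ha

lemma inl_eq_aeval_xg (p : ℚ[X]) : (inl p : A18) = aeval xg p := by
  rw [xg, ← inlAlgHom_apply ℚ ℚ[X] ℚ[X] X, aeval_algHom_apply, aeval_X_left_apply,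
    inlAlgHom_apply]

def der18 (k : ℤ) : Submodule ℚ (A18 →ₗ[ℚ] A18) where
  carrier := {θ | IsDer18 k θ}
  zero_mem' := ⟨fun _ _ _ => zero_mem _, fun _ _ _ _ => by simp⟩
  add_mem' {θ θ'} h h' := by
    refine ⟨fun n a ha => add_mem (h.1 n a ha) (h'.1 n a ha), fun m a ha b => ?_⟩
    simp only [LinearMap.add_apply, h.2 m a ha, h'.2 m a ha, mul_add, add_mul, smul_add]
    abel
  smul_mem' c θ h := by
    refine ⟨fun n a ha => Submodule.smul_mem _ c (h.1 n a ha), fun m a ha b => ?_⟩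
    simp only [LinearMap.smul_apply, h.2 m a ha, smul_add, smul_mul_assoc, mul_smul_comm,
      smul_comm c]

namespace IsDer18

variable {k : ℤ} {θ θ' : A18 →ₗ[ℚ] A18}

lemma leibniz_xg (h : IsDer18 k θ) (b : A18) : θ (xg * b) = θ xg * b + xg * θ b := by
  rw [h.2 2 xg xg_mem_gr18, Even.neg_one_zpow ⟨k, by ring⟩, one_smul]

lemma map_one (h : IsDer18 k θ) : θ 1 = 0 := by
  simpa using h.2 0 1 one_mem_gr18 1

lemma eq_zero_of_map_xg_of_map_yg (h : IsDer18 k θ) (hx : θ xg = 0) (hy : θ yg = 0) :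
    θ = 0 := by
  have hmul := map_aeval_mul_of_leibniz θ h.leibniz_xg hx
  ext1 a
  have ha : a = aeval xg (fst a) * 1 + aeval xg (snd a) * yg := by
    rw [← inl_eq_aeval_xg, ← inl_eq_aeval_xg, mul_one, yg, inl_mul_inr, smul_eq_mul, mul_one,
      inl_fst_add_inr_snd_eq]
  rw [ha, map_add, hmul, hmul, h.map_one, hy, mul_zero, mul_zero, add_zero,
    LinearMap.zero_apply]

lemma ext (h : IsDer18 k θ) (h' : IsDer18 k θ') (hx : θ xg = θ' xg) (hy : θ yg = θ' yg) :
    θ = θ' := by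
  have hsub : IsDer18 k (θ - θ') := (der18 k).sub_mem h h'
  exact sub_eq_zero.1 (hsub.eq_zero_of_map_xg_of_map_yg (by simp [hx]) (by simp [hy]))

lemma eq_zero_of_deg (h : IsDer18 k θ) (hk : k = -4 ∨ k ≤ -6) : θ = 0 := by
  have hx := h.1 2 xg xg_mem_gr18
  have hy := h.1 5 yg yg_mem_gr18
  rw [gr18_eq_bot (by omega), Submodule.mem_bot] at hx hy
  exact h.eq_zero_of_map_xg_of_map_yg hx hy

end IsDer18

/-- The derivation `(y, r)`. -/
noncomputable def derY (r : ℚ[X]) : A18 →ₗ[ℚ] A18 where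
  toFun a := inl (r * snd a)
  map_add' a b := by simp [mul_add]
  map_smul' c a := by simp

lemma derY_apply (r : ℚ[X]) (a : A18) : derY r a = inl (r * snd a) := rfl

lemma derY_xg (r : ℚ[X]) : derY r xg = 0 := by simp [derY_apply, xg]

lemma derY_yg (r : ℚ[X]) : derY r yg = inl r := by simp [derY_apply, yg]

lemma th1_eq_derY : th1 = derY (X ^ 0) := by
  ext1 a
  simp [th1, derY_apply]

lemma th2_eq_derY : th2 = derY (X ^ 1) := by
  ext1 a
  simp [th2, derY_apply]

lemma isDer18_derY {k : ℤ} {j : ℕ} (hk : 5 + k = 2 * j) : IsDer18 k (derY (X ^ j)) := by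
  have hodd : Odd k := ⟨j - 3, by omega⟩
  refine ⟨map_mem_gr18_of_monomials _ k (fun i => by simp [derY_apply]) fun i => ?_, ?_⟩
  · rw [show 2 * (i : ℤ) + 5 + k = 2 * ↑(j + i) by push_cast; omega]
    simpa [derY_apply, pow_add] using inl_X_pow_mem_gr18 (j + i)
  · intro m a ha b
    induction ha using Submodule.span_induction with
    | mem a h =>
      obtain ⟨i, rfl, rfl⟩ | ⟨i, rfl, rfl⟩ := h
      · rw [Even.neg_one_zpow ⟨k * i, by ring⟩]
        apply TrivSqZeroExt.ext <;> simp [derY_apply, mul_left_comm]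
      · rw [Odd.neg_one_zpow (Int.odd_mul.2 ⟨hodd, ⟨i + 2, by ring⟩⟩)]
        apply TrivSqZeroExt.ext <;> simp [derY_apply] <;> ring
    | zero => simp
    | add a a' _ _ ha ha' =>
      simp only [add_mul, map_add, ha, ha', smul_add]
      abel
    | smul c a _ ha =>
      simp only [smul_mul_assoc, map_smul, ha, smul_add, smul_comm c]

lemma d18_comp_derY (r : ℚ[X]) : d18 ∘ₗ derY r = 0 := by
  ext1 a
  simp [d18, derY_apply]

lemma derY_comp_d18 (r : ℚ[X]) : derY r ∘ₗ d18 = 0 := by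
  ext1 a
  simp [d18, derY_apply]

/-- The derivation `∂/∂x`, i.e. `(x, 1)`. -/
noncomputable def derX : A18 →ₗ[ℚ] A18 where
  toFun a := inl (derivative (fst a)) + inr (derivative (snd a))
  map_add' a b := by
    simp only [fst_add, snd_add, map_add, inl_add, inr_add]
    abel
  map_smul' c a := by simp [smul_add]

lemma derX_apply (a : A18) : derX a = inl (derivative (fst a)) + inr (derivative (snd a)) :=
  rfl

lemma isDer18_derX : IsDer18 (-2) derX := by
  refine ⟨map_mem_gr18_of_monomials _ _ (fun j => ?_) (fun j => ?_), fun m a _ b => ?_⟩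
  · cases j with
    | zero => simp [derX_apply]
    | succ j =>
      rw [show 2 * ((j + 1 : ℕ) : ℤ) + -2 = 2 * j by push_cast; ring]
      convert Submodule.smul_mem _ ((j + 1 : ℕ) : ℚ) (inl_X_pow_mem_gr18 j) using 1
      apply TrivSqZeroExt.ext <;> simp [derX_apply, smul_eq_C_mul]
  · cases j with
    | zero => simp [derX_apply]
    | succ j =>
      rw [show 2 * ((j + 1 : ℕ) : ℤ) + 5 + -2 = 2 * j + 5 by push_cast; ring]
      convert Submodule.smul_mem _ ((j + 1 : ℕ) : ℚ) (inr_X_pow_mem_gr18 j) using 1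
      apply TrivSqZeroExt.ext <;> simp [derX_apply, smul_eq_C_mul]
  · rw [Even.neg_one_zpow ⟨-m, by ring⟩, one_smul]
    apply TrivSqZeroExt.ext <;> simp [derX_apply, derivative_mul, add_add_add_comm]

lemma d18_comp_derX_sub : d18 ∘ₗ derX - derX ∘ₗ d18 = (-3 : ℚ) • derY (X ^ 2) := by
  ext1 a
  apply TrivSqZeroExt.ext
  · simp [d18, derX_apply, derY_apply, derivative_mul, smul_eq_C_mul, map_ofNat]
    ring
  · simp [d18, derX_apply, derY_apply]

namespace IsDer18

variable {k : ℤ} {θ : A18 →ₗ[ℚ] A18}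

lemma exists_eq_smul_derY (h : IsDer18 k θ) {j : ℕ} (hk : 5 + k = 2 * j) (hj : j ≤ 2) :
    ∃ c : ℚ, θ = c • derY (X ^ j) := by
  have hx := h.1 2 xg xg_mem_gr18
  rw [gr18_eq_bot (by omega), Submodule.mem_bot] at hx
  have hy := h.1 5 yg yg_mem_gr18
  rw [hk, gr18_two_mul, Submodule.mem_span_singleton] at hy
  obtain ⟨c, hc⟩ := hy
  refine ⟨c, h.ext (Submodule.smul_mem (der18 k) c (isDer18_derY hk)) ?_ ?_⟩
  · simp [hx, derY_xg]
  · simp [← hc, derY_yg]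

lemma eq_zero_of_cocycle_of_deg_neg_two (h : IsDer18 (-2) θ)
    (hθ : d18 ∘ₗ θ - ((-1 : ℚ) ^ (-2 : ℤ)) • (θ ∘ₗ d18) = 0) : θ = 0 := by
  have hy := h.1 5 yg yg_mem_gr18
  rw [gr18_eq_bot (by norm_num), Submodule.mem_bot] at hy
  have hx := h.1 2 xg xg_mem_gr18
  rw [show (2 : ℤ) + -2 = 2 * (0 : ℕ) by norm_num, gr18_two_mul, pow_zero, inl_one,
    Submodule.mem_span_singleton] at hx
  obtain ⟨c, hc⟩ := hx
  have hx3 : θ (xg ^ (2 + 1)) = 0 := by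
    simpa [hy, d18_yg] using LinearMap.congr_fun hθ yg
  have hc0 : c = 0 :=
    eq_zero_of_map_pow_succ_eq_zero θ h.leibniz_xg hc.symm (xg_pow_ne_zero 2) hx3
  exact h.eq_zero_of_map_xg_of_map_yg (by rw [← hc, hc0, zero_smul]) hy

end IsDer18

lemma not_bdry18 {k : ℤ} {θ : A18 →ₗ[ℚ] A18} (hk : k = -3 ∨ k ≤ -5) (hθ : θ ≠ 0) :
    ¬ Bdry18 k θ := by
  rintro ⟨η, hη, rfl⟩
  simp [hη.eq_zero_of_deg (by omega)] at hθ

lemma derY_ne_zero {r : ℚ[X]} (hr : r ≠ 0) : derY r ≠ 0 := fun h =>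
  hr (by simpa [derY_yg] using congrArg fst (LinearMap.congr_fun h yg))

lemma exists_eq_smul_add_bdry18 {k : ℤ} (hk : k < 0) {θ : A18 →ₗ[ℚ] A18} (h : IsDer18 k θ)
    (hθ : d18 ∘ₗ θ - ((-1 : ℚ) ^ k) • (θ ∘ₗ d18) = 0) :
    ∃ (c : ℚ) (η : A18 →ₗ[ℚ] A18), IsDer18 (k - 1) η ∧
      θ = c • (if k = -5 then th1 else if k = -3 then th2 else 0)
          + (d18 ∘ₗ η - ((-1 : ℚ) ^ (k - 1)) • (η ∘ₗ d18)) := by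
  obtain rfl | rfl | rfl | rfl | rfl | hk6 :
      k = -1 ∨ k = -2 ∨ k = -3 ∨ k = -4 ∨ k = -5 ∨ k ≤ -6 := by omega
  · obtain ⟨c, rfl⟩ := h.exists_eq_smul_derY (j := 2) (by norm_num) le_rfl
    refine ⟨0, (-c / 3) • derX, Submodule.smul_mem (der18 _) _ isDer18_derX, ?_⟩
    rw [LinearMap.comp_smul, LinearMap.smul_comp, show (-1 : ℚ) ^ (-1 - 1 : ℤ) = 1 by norm_num,
      one_smul, zero_smul, zero_add]
    linear_combination (norm := module) (c / 3) • d18_comp_derX_sub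
  · exact ⟨0, 0, zero_mem (der18 _), by simp [h.eq_zero_of_cocycle_of_deg_neg_two hθ]⟩
  · obtain ⟨c, rfl⟩ := h.exists_eq_smul_derY (j := 1) (by norm_num) (by norm_num)
    exact ⟨c, 0, zero_mem (der18 _), by simp [th2_eq_derY]⟩
  · exact ⟨0, 0, zero_mem (der18 _), by simp [h.eq_zero_of_deg (by norm_num)]⟩
  · obtain ⟨c, rfl⟩ := h.exists_eq_smul_derY (j := 0) (by norm_num) (by norm_num)
    exact ⟨c, 0, zero_mem (der18 _), by simp [th1_eq_derY]⟩
  · exact ⟨0, 0, zero_mem (der18 _), by simp [h.eq_zero_of_deg (Or.inr hk6)]⟩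

section Cohomology

local notation "mkB" => Ideal.Quotient.mk (Ideal.span {(X : ℚ[X]) ^ 3})

lemma grB_eq_bot {n : ℤ} (h : n < 0 ∨ n = 1) : grB n = ⊥ := by
  rw [grB, Submodule.span_eq_bot]
  rintro b ⟨k, hk, -⟩
  omega

lemma grB_zero : grB 0 = Submodule.span ℚ {1} := by
  rw [grB]
  congr 1
  ext b
  constructor
  · rintro ⟨k, hk, rfl⟩
    obtain rfl : k = 0 := by omega
    simp
  · rintro rfl
    exact ⟨0, by norm_num, by simp⟩

lemma one_mem_grB : (1 : B18) ∈ grB 0 :=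
  Submodule.subset_span ⟨0, by norm_num, by simp⟩

lemma mkB_X_mem_grB : mkB X ∈ grB 2 :=
  Submodule.subset_span ⟨1, by norm_num, by rw [pow_one]⟩

lemma mkB_X_pow_three : mkB X ^ 3 = 0 := by
  rw [← map_pow, Ideal.Quotient.eq_zero_iff_mem]
  exact Ideal.subset_span rfl

lemma mkB_X_pow_two_ne_zero : mkB X ^ 2 ≠ 0 := by
  rw [← map_pow, Ne, Ideal.Quotient.eq_zero_iff_mem, Ideal.mem_span_singleton]
  intro h
  simpa using X_pow_dvd_iff.1 h 2 (by norm_num)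

lemma mkB_eq_aeval (p : ℚ[X]) : mkB p = aeval (mkB X) p := by
  rw [← Ideal.Quotient.mkₐ_eq_mk ℚ, aeval_algHom_apply, aeval_X_left_apply]

lemma IsDerB.eq_zero {k : ℤ} (hk : k < 0) {θ : B18 →ₗ[ℚ] B18} (h : IsDerB k θ) : θ = 0 := by
  have hx : ∀ b, θ (mkB X * b) = θ (mkB X) * b + mkB X * θ b := fun b => by
    rw [h.2 2 _ mkB_X_mem_grB, Even.neg_one_zpow ⟨k, by ring⟩, one_smul]
  have h1 : θ 1 = 0 := by simpa using h.2 0 1 one_mem_grB 1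
  have hx0 : θ (mkB X) = 0 := by
    have hmem := h.1 2 _ mkB_X_mem_grB
    obtain rfl | hk2 := eq_or_ne k (-2)
    · rw [show (2 : ℤ) + -2 = 0 by norm_num, grB_zero, Submodule.mem_span_singleton] at hmem
      obtain ⟨c, hc⟩ := hmem
      have hc0 : c = 0 := eq_zero_of_map_pow_succ_eq_zero θ hx hc.symm mkB_X_pow_two_ne_zero
        (by rw [mkB_X_pow_three, map_zero])
      rw [← hc, hc0, zero_smul]
    · rwa [grB_eq_bot (by omega), Submodule.mem_bot] at hmem
  refine LinearMap.ext fun b => ?_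
  obtain ⟨p, rfl⟩ := Ideal.Quotient.mk_surjective b
  rw [mkB_eq_aeval, ← mul_one (aeval _ p), map_aeval_mul_of_leibniz θ hx hx0, h1, mul_zero,
    LinearMap.zero_apply]

end Cohomology

/-- For the minimal Sullivan model `(∧(x, y), d)` of `ℂP²`
(`deg x = 2`, `deg y = 5`, `d x = 0`, `d y = x³`):
(1) the homology of the complex of negative-degree derivations is
two-dimensional, spanned by the classes of the derivations `(y, 1)` and
`(y, x)` in degrees `-5` and `-3`;
(2) every negative-degree derivation of the graded algebra `ℚ[x]/(x³)` is zero;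
in particular, the quasi-isomorphism `(∧(x, y), d) → ℚ[x]/(x³)` (sending `x` to
`x` and `y` to `0`) does not induce an isomorphism between the homologies of
the derivation complexes. -/
theorem cp2_derivation_homology :
    -- (1) `(y,1)` and `(y,x)` are cocycles of degrees `-5`, `-3`, …
    (IsDer18 (-5) th1 ∧ d18 ∘ₗ th1 - ((-1 : ℚ) ^ (-5 : ℤ)) • (th1 ∘ₗ d18) = 0) ∧
    (IsDer18 (-3) th2 ∧ d18 ∘ₗ th2 - ((-1 : ℚ) ^ (-3 : ℤ)) • (th2 ∘ₗ d18) = 0) ∧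
    -- … their classes are nonzero, …
    (¬ Bdry18 (-5) th1) ∧ (¬ Bdry18 (-3) th2) ∧
    -- … and they span the homology of the negative-degree derivation complex
    (∀ k : ℤ, k < 0 → ∀ θ : A18 →ₗ[ℚ] A18, IsDer18 k θ →
      d18 ∘ₗ θ - ((-1 : ℚ) ^ k) • (θ ∘ₗ d18) = 0 →
      ∃ (c : ℚ) (η : A18 →ₗ[ℚ] A18), IsDer18 (k - 1) η ∧
        θ = c • (if k = -5 then th1 else if k = -3 then th2 else 0)
            + (d18 ∘ₗ η - ((-1 : ℚ) ^ (k - 1)) • (η ∘ₗ d18))) ∧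
    -- (2) all negative-degree derivations of `ℚ[x]/(x³)` vanish
    (∀ k : ℤ, k < 0 → ∀ θ : B18 →ₗ[ℚ] B18, IsDerB k θ → θ = 0) ∧
    -- in particular no map of the homologies of the derivation complexes can be
    -- injective in degree `-5`, so none is an isomorphism
    ¬ ∃ F : (A18 →ₗ[ℚ] A18) → (B18 →ₗ[ℚ] B18),
        ∀ θ, IsDer18 (-5) θ → d18 ∘ₗ θ - ((-1 : ℚ) ^ (-5 : ℤ)) • (θ ∘ₗ d18) = 0 →
          IsDerB (-5) (F θ) ∧ (F θ = 0 → Bdry18 (-5) θ) := by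
  have th1_cocycle : d18 ∘ₗ th1 - ((-1 : ℚ) ^ (-5 : ℤ)) • (th1 ∘ₗ d18) = 0 := by
    simp [th1_eq_derY, d18_comp_derY, derY_comp_d18]
  have th2_cocycle : d18 ∘ₗ th2 - ((-1 : ℚ) ^ (-3 : ℤ)) • (th2 ∘ₗ d18) = 0 := by
    simp [th2_eq_derY, d18_comp_derY, derY_comp_d18]
  have th1_der : IsDer18 (-5) th1 := th1_eq_derY ▸ isDer18_derY (by norm_num)
  have th1_not_bdry : ¬ Bdry18 (-5) th1 :=
    not_bdry18 (by norm_num) (th1_eq_derY ▸ derY_ne_zero (pow_ne_zero 0 X_ne_zero))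
  refine ⟨⟨th1_der, th1_cocycle⟩,
    ⟨th2_eq_derY ▸ isDer18_derY (by norm_num), th2_cocycle⟩, th1_not_bdry,
    not_bdry18 (by norm_num) (th2_eq_derY ▸ derY_ne_zero (pow_ne_zero 1 X_ne_zero)),
    fun k hk θ h hθ => exists_eq_smul_add_bdry18 hk h hθ, fun k hk θ h => h.eq_zero hk, ?_⟩
  rintro ⟨F, hF⟩
  obtain ⟨hFder, hFbdry⟩ := hF th1 th1_der th1_cocycle
  exact th1_not_bdry (hFbdry (hFder.eq_zero (by norm_num)))
end
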